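/- For a closed formula A of Σ, the following are equivalent: (1) A holds in every standard model of (Σ, Φ); (2) A holds in every standard term model of (Σ_c, Φ), where Σ_c extends Σ by countably many fresh constants. -/

import Mathlib

/-! ### First-order logic with inductively defined predicates (FOL_ID) -/

/-- A first-order signature with ordinary and inductive predicate symbols. -/
structure Signature : Type 1 where
  Func : Type
  arF : Func → ℕ
  Pred : Type
  arP : Pred → ℕ
  IndPred : Type
  arI : IndPred → ℕ

/-- Terms over a signature. -/
inductive Tm (S : Signature) : Type
  | var : ℕ → Tm S
  | func (f : S.Func) : (Fin (S.arF f) → Tm S) → Tm S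

/-- Formulas of FOL_ID. -/
inductive Fm (S : Signature) : Type
  | fals : Fm S
  | eq : Tm S → Tm S → Fm S
  | pred (Q : S.Pred) : (Fin (S.arP Q) → Tm S) → Fm S
  | ind (P : S.IndPred) : (Fin (S.arI P) → Tm S) → Fm S
  | not : Fm S → Fm S
  | and : Fm S → Fm S → Fm S
  | or : Fm S → Fm S → Fm S
  | imp : Fm S → Fm S → Fm S
  | all : ℕ → Fm S → Fm S
  | ex : ℕ → Fm S → Fm S

/-- A first-order structure for a signature. -/
structure Struc (S : Signature) : Type 1 where
  U : Type
  interpF (f : S.Func) : (Fin (S.arF f) → U) → U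
  interpP (Q : S.Pred) : Set (Fin (S.arP Q) → U)
  interpI : Set ((P : S.IndPred) × (Fin (S.arI P) → U))

/-- Evaluation of terms. -/
def Tm.eval {S : Signature} (M : Struc S) (ρ : ℕ → M.U) : Tm S → M.U
  | .var n => ρ n
  | .func f ts => M.interpF f (fun i => (ts i).eval M ρ)

/-- Update of a variable assignment. -/
def update {α : Type} (ρ : ℕ → α) (n : ℕ) (a : α) : ℕ → α :=
  fun m => if m = n then a else ρ m

/-- Tarskian satisfaction. -/
def Sat {S : Signature} (M : Struc S) (ρ : ℕ → M.U) : Fm S → Prop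
  | .fals => False
  | .eq t u => t.eval M ρ = u.eval M ρ
  | .pred Q ts => (fun i => (ts i).eval M ρ) ∈ M.interpP Q
  | .ind P ts => ⟨P, fun i => (ts i).eval M ρ⟩ ∈ M.interpI
  | .not A => ¬ Sat M ρ A
  | .and A B => Sat M ρ A ∧ Sat M ρ B
  | .or A B => Sat M ρ A ∨ Sat M ρ B
  | .imp A B => Sat M ρ A → Sat M ρ B
  | .all n A => ∀ a : M.U, Sat M (update ρ n a) A
  | .ex n A => ∃ a : M.U, Sat M (update ρ n a) A

/-- Free variables of a term. -/
def Tm.fv {S : Signature} : Tm S → Finset ℕ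
  | .var n => {n}
  | .func _ ts => Finset.univ.biUnion (fun i => (ts i).fv)

/-- Free variables of a formula. -/
def Fm.fv {S : Signature} : Fm S → Finset ℕ
  | .fals => ∅
  | .eq t u => t.fv ∪ u.fv
  | .pred _ ts => Finset.univ.biUnion (fun i => (ts i).fv)
  | .ind _ ts => Finset.univ.biUnion (fun i => (ts i).fv)
  | .not A => A.fv
  | .and A B => A.fv ∪ B.fv
  | .or A B => A.fv ∪ B.fv
  | .imp A B => A.fv ∪ B.fv
  | .all n A => A.fv.erase n
  | .ex n A => A.fv.erase n

/-- Simultaneous substitution on terms. -/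
def Tm.subst {S : Signature} (σ : ℕ → Tm S) : Tm S → Tm S
  | .var n => σ n
  | .func f ts => .func f (fun i => (ts i).subst σ)

/-- Substitution of a (closed) term for a variable in a formula. -/
def Fm.substC {S : Signature} (x : ℕ) (t : Tm S) : Fm S → Fm S
  | .fals => .fals
  | .eq a b => .eq (a.subst (fun n => if n = x then t else .var n))
      (b.subst (fun n => if n = x then t else .var n))
  | .pred Q ts => .pred Q (fun i => (ts i).subst (fun n => if n = x then t else .var n))
  | .ind P ts => .ind P (fun i => (ts i).subst (fun n => if n = x then t else .var n))
  | .not A => .not (A.substC x t)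
  | .and A B => .and (A.substC x t) (B.substC x t)
  | .or A B => .or (A.substC x t) (B.substC x t)
  | .imp A B => .imp (A.substC x t) (B.substC x t)
  | .all n A => if n = x then .all n A else .all n (A.substC x t)
  | .ex n A => if n = x then .ex n A else .ex n (A.substC x t)

/-- A production rule for inductive predicates. -/
structure ProdRule (S : Signature) : Type where
  concl : S.IndPred
  conclArgs : Fin (S.arI concl) → Tm S
  ordPrems : List ((Q : S.Pred) × (Fin (S.arP Q) → Tm S))
  indPrems : List ((P : S.IndPred) × (Fin (S.arI P) → Tm S))

/-- The monotone operator determined by a set of production rules over a structure. -/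
def step {S : Signature} (M : Struc S) (Φ : List (ProdRule S))
    (X : Set ((P : S.IndPred) × (Fin (S.arI P) → M.U))) :
    Set ((P : S.IndPred) × (Fin (S.arI P) → M.U)) :=
  { v | ∃ r ∈ Φ, ∃ ρ : ℕ → M.U,
      (∀ q ∈ r.ordPrems, (fun i => (q.2 i).eval M ρ) ∈ M.interpP q.1) ∧
      (∀ p ∈ r.indPrems, ⟨p.1, fun i => (p.2 i).eval M ρ⟩ ∈ X) ∧
      v = ⟨r.concl, fun i => (r.conclArgs i).eval M ρ⟩ }

theorem step_mono {S : Signature} (M : Struc S) (Φ : List (ProdRule S)) :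
    Monotone (step M Φ) := by
  rintro X Y h v ⟨r, hr, ρ, hq, hp, hv⟩
  exact ⟨r, hr, ρ, hq, fun p hp' => h (hp p hp'), hv⟩

/-- The operator for the production rules, as an order homomorphism. -/
def stepHom {S : Signature} (M : Struc S) (Φ : List (ProdRule S)) :
    Set ((P : S.IndPred) × (Fin (S.arI P) → M.U)) →o
      Set ((P : S.IndPred) × (Fin (S.arI P) → M.U)) :=
  ⟨step M Φ, step_mono M Φ⟩

/-- A structure is a standard model for `(S, Φ)` if it interprets the inductive
predicates by the least fixpoint of the operator for `Φ`. -/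
def Standard {S : Signature} (M : Struc S) (Φ : List (ProdRule S)) : Prop :=
  M.interpI = OrderHom.lfp (stepHom M Φ)

/-- The variables occurring in a production rule. -/
def ProdRule.vars {S : Signature} (r : ProdRule S) : Finset ℕ :=
  (Finset.univ.biUnion fun i => (r.conclArgs i).fv) ∪
    (r.ordPrems.foldr (fun q s => s ∪ Finset.univ.biUnion fun i => (q.2 i).fv) ∅) ∪
    (r.indPrems.foldr (fun p s => s ∪ Finset.univ.biUnion fun i => (p.2 i).fv) ∅)

def bigAnd {S : Signature} : List (Fm S) → Fm S
  | [] => .not .fals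
  | A :: l => .and A (bigAnd l)

def bigOr {S : Signature} : List (Fm S) → Fm S
  | [] => .fals
  | A :: l => .or A (bigOr l)

def exList {S : Signature} : List ℕ → Fm S → Fm S
  | [], A => A
  | n :: l, A => .ex n (exList l A)

/-- The `k`-fold syntactic unfolding `P^{(k)}(t⃗)` of an inductive predicate:
`P^{(0)}(t⃗) ≡ ⊥` and `P^{(k+1)}(t⃗)` is the disjunction, over production rules with
conclusion `P t⃗₀`, of `∃y⃗ (t⃗ = t⃗₀ ∧ ⋀ Q_l u⃗_l ∧ ⋀ P_{j_p}^{(k)}(t⃗_p))`, with the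
rule variables `y⃗` renamed to be fresh for `t⃗`. -/
def unfold {S : Signature} [DecidableEq S.IndPred] (Φ : List (ProdRule S)) :
    ℕ → (P : S.IndPred) → (Fin (S.arI P) → Tm S) → Fm S
  | 0, _, _ => .fals
  | (k+1), P, ts =>
    bigOr (Φ.map fun r =>
      if h : r.concl = P then
        let N : ℕ := ((Finset.univ.biUnion fun i => (ts i).fv).sup id) + 1
        let σ : ℕ → Tm S := fun n => .var (n + N)
        exList ((r.vars.sort (· ≤ ·)).map (· + N))
          (.and (bigAnd ((List.finRange (S.arI P)).map fun i =>
              .eq (ts i) (((h ▸ r.conclArgs) i).subst σ)))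
            (.and (bigAnd (r.ordPrems.map fun q => .pred q.1 fun i => (q.2 i).subst σ))
              (bigAnd (r.indPrems.map fun p => unfold Φ k p.1 fun i => (p.2 i).subst σ))))
      else .fals)
/-! ### Name constants and term models -/

/-- The signature `Σ_c` extending `Σ` by countably many fresh name constants. -/
def Signature.addConsts (S : Signature) : Signature where
  Func := S.Func ⊕ ℕ
  arF := fun f => match f with
    | .inl f => S.arF f
    | .inr _ => 0
  Pred := S.Pred
  arP := S.arP
  IndPred := S.IndPred
  arI := S.arI

/-- Lifting of terms along `Σ ⊆ Σ_c`. -/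
def Tm.lift {S : Signature} : Tm S → Tm S.addConsts
  | .var n => .var n
  | .func f ts => .func (Sum.inl f) (fun i => (ts i).lift)

/-- Lifting of formulas along `Σ ⊆ Σ_c`. -/
def Fm.lift {S : Signature} : Fm S → Fm S.addConsts
  | .fals => .fals
  | .eq t u => .eq t.lift u.lift
  | .pred Q ts => .pred Q (fun i => (ts i).lift)
  | .ind P ts => .ind P (fun i => (ts i).lift)
  | .not A => .not A.lift
  | .and A B => .and A.lift B.lift
  | .or A B => .or A.lift B.lift
  | .imp A B => .imp A.lift B.lift
  | .all n A => .all n A.lift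
  | .ex n A => .ex n A.lift

/-- Lifting of production rules along `Σ ⊆ Σ_c`. -/
def ProdRule.lift {S : Signature} (r : ProdRule S) : ProdRule S.addConsts where
  concl := r.concl
  conclArgs := fun i => (r.conclArgs i).lift
  ordPrems := r.ordPrems.map fun q => ⟨q.1, fun i => (q.2 i).lift⟩
  indPrems := r.indPrems.map fun p => ⟨p.1, fun i => (p.2 i).lift⟩

/-- The name-extension `M_c` of a structure `M`, interpreting the `i`-th name
constant as `c i`. -/
def addConstsStruc {S : Signature} (M : Struc S) (c : ℕ → M.U) : Struc S.addConsts where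
  U := M.U
  interpF := fun f => match f with
    | .inl f => M.interpF f
    | .inr n => fun _ => c n
  interpP := M.interpP
  interpI := M.interpI

/-- A structure for `Σ_c` is name-extended if every element of its universe is the
interpretation of some name constant. -/
def NameExtended {S : Signature} (M : Struc S.addConsts) : Prop :=
  ∀ u : M.U, ∃ n : ℕ, M.interpF (Sum.inr n) (fun i => i.elim0) = u

/-- Closed terms of a signature. -/
def ClosedTm (S : Signature) : Type := {t : Tm S // t.fv = ∅}

/-- Application of a function symbol to closed terms. -/
def ClosedTm.func {S : Signature} (f : S.Func) (ts : Fin (S.arF f) → ClosedTm S) :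
    ClosedTm S :=
  ⟨.func f (fun i => (ts i).1), by
    have h : ∀ i, ((ts i).1).fv = ∅ := fun i => (ts i).2
    simp only [Tm.fv, h]
    ext n
    simp⟩

/-- The data of a term model: an equivalence relation on closed terms compatible with
the function symbols, together with interpretations of the predicate symbols on
closed terms that respect the relation. -/
structure TermModelData (S : Signature) : Type where
  rel : ClosedTm S → ClosedTm S → Prop
  equiv : Equivalence rel
  congrF : ∀ (f : S.Func) (ts us : Fin (S.arF f) → ClosedTm S),
    (∀ i, rel (ts i) (us i)) → rel (ClosedTm.func f ts) (ClosedTm.func f us)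
  interpP (Q : S.Pred) : Set (Fin (S.arP Q) → ClosedTm S)
  respP : ∀ (Q : S.Pred) (ts us : Fin (S.arP Q) → ClosedTm S),
    (∀ i, rel (ts i) (us i)) → (ts ∈ interpP Q ↔ us ∈ interpP Q)
  interpI : Set ((P : S.IndPred) × (Fin (S.arI P) → ClosedTm S))
  respI : ∀ (P : S.IndPred) (ts us : Fin (S.arI P) → ClosedTm S),
    (∀ i, rel (ts i) (us i)) → (⟨P, ts⟩ ∈ interpI ↔ ⟨P, us⟩ ∈ interpI)

def TermModelData.setoid {S : Signature} (D : TermModelData S) : Setoid (ClosedTm S) :=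
  ⟨D.rel, D.equiv⟩

/-- The term model determined by term-model data: its universe is the quotient of the
set of closed terms, constants and function symbols are interpreted syntactically on
equivalence classes. -/
noncomputable def TermModelData.toStruc {S : Signature} (D : TermModelData S) : Struc S where
  U := Quotient D.setoid
  interpF f args :=
    Quotient.mk D.setoid (ClosedTm.func f (fun i => (args i).out))
  interpP Q := { v | ∃ g : Fin (S.arP Q) → ClosedTm S,
      (∀ i, v i = Quotient.mk D.setoid (g i)) ∧ g ∈ D.interpP Q }
  interpI := { v | ∃ g : Fin (S.arI v.1) → ClosedTm S,
      (∀ i, v.2 i = Quotient.mk D.setoid (g i)) ∧ ⟨v.1, g⟩ ∈ D.interpI }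

/-- The term-model data canonically associated with a structure `M`: closed terms are
identified iff they have the same value in `M`, and predicates hold of closed terms
iff they hold of their values in `M`. -/
def Struc.termData {S : Signature} (M : Struc S) : TermModelData S where
  rel t u := ∀ ρ : ℕ → M.U, t.1.eval M ρ = u.1.eval M ρ
  equiv := ⟨fun _ _ => rfl, fun h ρ => (h ρ).symm, fun h h' ρ => (h ρ).trans (h' ρ)⟩
  congrF f ts us h := fun ρ => congrArg (M.interpF f) (funext fun i => h i ρ)
  interpP Q := { ts | ∀ ρ : ℕ → M.U, (fun i => (ts i).1.eval M ρ) ∈ M.interpP Q }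
  respP Q ts us h := by
    constructor <;> intro hm ρ <;> have := hm ρ
    · rwa [show (fun i => (us i).1.eval M ρ) = fun i => (ts i).1.eval M ρ from
        funext fun i => (h i ρ).symm]
    · rwa [show (fun i => (ts i).1.eval M ρ) = fun i => (us i).1.eval M ρ from
        funext fun i => h i ρ]
  interpI := { v | ∀ ρ : ℕ → M.U, (⟨v.1, fun i => (v.2 i).1.eval M ρ⟩ :
      (P : S.IndPred) × (Fin (S.arI P) → M.U)) ∈ M.interpI }
  respI P ts us h := by
    constructor <;> intro hm ρ <;> have := hm ρ
    · rwa [show (fun i => (us i).1.eval M ρ) = fun i => (ts i).1.eval M ρ from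
        funext fun i => (h i ρ).symm]
    · rwa [show (fun i => (ts i).1.eval M ρ) = fun i => (us i).1.eval M ρ from
        funext fun i => h i ρ]

/-- The term model `M_T` of a structure `M`. -/
noncomputable def termModel {S : Signature} (M : Struc S) : Struc S :=
  (Struc.termData M).toStruc

/-! For (1 ⇒ 2): the `Σ`-reduct of a standard term model of `(Σ_c, Φ)` is a nonempty standard
model of `(Σ, Φ)` satisfying the same `Σ`-formulas.

For (2 ⇒ 1), a downward Löwenheim–Skolem argument: given a standard model `M` and an assignment
`ρ`, close `range ρ` into a countable set `H` that is closed under the functions of `M`, contains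
Skolem witnesses for the quantified subformulas of `A`, and contains, for every instance of a
production rule firing at a finite stage `Φⁿ(∅)` with conclusion in `H`, an instance with the same
conclusion whose variables take values in `H`. Naming the elements of `H` by the constants of
`Σ_c`, the term model of `M_c` embeds into `M` with image `H`. The Tarski–Vaught test transfers
`A` along this embedding, and the rule witnesses make the stages `Φⁿ(∅)` of the two structures
correspond, hence (by Kleene's theorem) also their least fixpoints. -/

section Stages

variable {S : Signature}

theorem step_iUnion_subset (M : Struc S) (Φ : List (ProdRule S))
    (c : ℕ → Set ((P : S.IndPred) × (Fin (S.arI P) → M.U))) (hc : Monotone c) :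
    step M Φ (⋃ n, c n) ⊆ ⋃ n, step M Φ (c n) := by
  classical
  rintro v ⟨r, hr, ρ, hq, hp, rfl⟩
  choose n hn using fun p : {p // p ∈ r.indPrems} => Set.mem_iUnion.1 (hp p.1 p.2)
  obtain ⟨N, hN⟩ := Finite.exists_le n
  exact Set.mem_iUnion.2 ⟨N, r, hr, ρ, hq, fun p hp' => hc (hN ⟨p, hp'⟩) (hn ⟨p, hp'⟩), rfl⟩

theorem stepHom_ωScottContinuous (M : Struc S) (Φ : List (ProdRule S)) :
    OmegaCompletePartialOrder.ωScottContinuous (stepHom M Φ) :=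
  OmegaCompletePartialOrder.ωScottContinuous.of_map_ωSup_of_orderHom fun c =>
    le_antisymm (step_iUnion_subset M Φ c c.monotone) (step_mono M Φ).le_map_iSup

theorem lfp_stepHom_eq_iUnion (M : Struc S) (Φ : List (ProdRule S)) :
    OrderHom.lfp (stepHom M Φ) = ⋃ n, (step M Φ)^[n] ∅ :=
  fixedPoints.lfp_eq_sSup_iterate _ (stepHom_ωScottContinuous M Φ)

end Stages

section Coincidence

variable {S : Signature}

theorem Tm.eval_congr (M : Struc S) {ρ ρ' : ℕ → M.U} :
    ∀ t : Tm S, Set.EqOn ρ ρ' t.fv → t.eval M ρ = t.eval M ρ'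
  | .var _, h => h (Finset.mem_singleton_self _)
  | .func f ts, h => congrArg (M.interpF f) <| funext fun i =>
      Tm.eval_congr M (ts i) fun _ hm => h (Finset.mem_biUnion.2 ⟨i, Finset.mem_univ i, hm⟩)

theorem eqOn_update {α : Type} {ρ ρ' : ℕ → α} {s : Finset ℕ} {n : ℕ}
    (h : Set.EqOn ρ ρ' (s.erase n)) (a : α) : Set.EqOn (update ρ n a) (update ρ' n a) s := by
  intro m hm
  unfold update
  split_ifs with hmn
  · rfl
  · exact h (Finset.mem_erase.2 ⟨hmn, hm⟩)

theorem comp_update {α β : Type} (g : α → β) (ρ : ℕ → α) (n : ℕ) (a : α) :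
    g ∘ update ρ n a = update (g ∘ ρ) n (g a) := by
  funext m
  simp only [update, Function.comp_apply, apply_ite g]

theorem Tm.eval_tuple_congr (M : Struc S) {ρ ρ' : ℕ → M.U} {k : ℕ} (ts : Fin k → Tm S)
    (h : Set.EqOn ρ ρ' (Finset.univ.biUnion fun i => (ts i).fv)) :
    (fun i => (ts i).eval M ρ) = fun i => (ts i).eval M ρ' :=
  funext fun i =>
    Tm.eval_congr M (ts i) fun _ hm => h (Finset.mem_biUnion.2 ⟨i, Finset.mem_univ i, hm⟩)

theorem sat_congr (M : Struc S) :
    ∀ (B : Fm S) {ρ ρ' : ℕ → M.U}, Set.EqOn ρ ρ' B.fv → (Sat M ρ B ↔ Sat M ρ' B)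
  | .fals, _, _, _ => Iff.rfl
  | .eq t u, _, _, h => by
    rw [Sat, Sat, Tm.eval_congr M t (h.mono Finset.subset_union_left),
      Tm.eval_congr M u (h.mono Finset.subset_union_right)]
  | .pred _ ts, _, _, h => by rw [Sat, Sat, Tm.eval_tuple_congr M ts h]
  | .ind _ ts, _, _, h => by rw [Sat, Sat, Tm.eval_tuple_congr M ts h]
  | .not B, _, _, h => not_congr (sat_congr M B h)
  | .and B C, _, _, h => and_congr (sat_congr M B (h.mono Finset.subset_union_left))
      (sat_congr M C (h.mono Finset.subset_union_right))
  | .or B C, _, _, h => or_congr (sat_congr M B (h.mono Finset.subset_union_left))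
      (sat_congr M C (h.mono Finset.subset_union_right))
  | .imp B C, _, _, h => imp_congr (sat_congr M B (h.mono Finset.subset_union_left))
      (sat_congr M C (h.mono Finset.subset_union_right))
  | .all _ B, _, _, h => forall_congr' fun a => sat_congr M B (eqOn_update h a)
  | .ex _ B, _, _, h => exists_congr fun a => sat_congr M B (eqOn_update h a)

end Coincidence

section Lift

variable {S : Signature}

def Struc.reduct (M : Struc S.addConsts) : Struc S where
  U := M.U
  interpF f := M.interpF (.inl f)
  interpP := M.interpP
  interpI := M.interpI

theorem Tm.eval_lift (M : Struc S.addConsts) (ρ : ℕ → M.U) :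
    ∀ t : Tm S, t.lift.eval M ρ = t.eval M.reduct ρ
  | .var _ => rfl
  | .func f ts => congrArg (M.interpF (.inl f)) (funext fun i => Tm.eval_lift M ρ (ts i))

theorem sat_lift (M : Struc S.addConsts) (B : Fm S) (ρ : ℕ → M.U) :
    Sat M ρ B.lift ↔ Sat M.reduct ρ B := by
  induction B generalizing ρ <;> simp only [Fm.lift, Sat, Tm.eval_lift, *] <;> rfl

theorem step_lift (M : Struc S.addConsts) (Φ : List (ProdRule S)) :
    step M (Φ.map ProdRule.lift) = step M.reduct Φ := by
  funext X
  ext v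
  simp only [step, Set.mem_ofPred_eq, List.mem_map, exists_exists_and_eq_and, ProdRule.lift,
    forall_exists_index, and_imp, forall_apply_eq_imp_iff₂, Tm.eval_lift]
  rfl

theorem standard_lift (M : Struc S.addConsts) (Φ : List (ProdRule S)) :
    Standard M (Φ.map ProdRule.lift) ↔ Standard M.reduct Φ := by
  rw [Standard, Standard, show stepHom M (Φ.map ProdRule.lift) = stepHom M.reduct Φ from
    OrderHom.ext _ _ (step_lift M Φ)]
  rfl

end Lift

section Rules

variable {S : Signature}

def ProdRule.conclAt (r : ProdRule S) (N : Struc S) (ρ : ℕ → N.U) :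
    (P : S.IndPred) × (Fin (S.arI P) → N.U) :=
  ⟨r.concl, fun i => (r.conclArgs i).eval N ρ⟩

def ProdRule.PremisesHold (r : ProdRule S) (N : Struc S)
    (X : Set ((P : S.IndPred) × (Fin (S.arI P) → N.U))) (ρ : ℕ → N.U) : Prop :=
  (∀ q ∈ r.ordPrems, (fun i => (q.2 i).eval N ρ) ∈ N.interpP q.1) ∧
    ∀ p ∈ r.indPrems, Sigma.mk p.1 (fun i => (p.2 i).eval N ρ) ∈ X

theorem mem_step {N : Struc S} {Φ : List (ProdRule S)}
    {X : Set ((P : S.IndPred) × (Fin (S.arI P) → N.U))}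
    {v : (P : S.IndPred) × (Fin (S.arI P) → N.U)} :
    v ∈ step N Φ X ↔ ∃ r ∈ Φ, ∃ ρ, r.PremisesHold N X ρ ∧ v = r.conclAt N ρ := by
  simp only [step, Set.mem_ofPred_eq, ProdRule.PremisesHold, ProdRule.conclAt, and_assoc]

def RuleWitnessedAt (N : Struc S) (H : Set N.U)
    (X : Set ((P : S.IndPred) × (Fin (S.arI P) → N.U))) (r : ProdRule S) : Prop :=
  ∀ ρ, (∀ i, (r.conclAt N ρ).2 i ∈ H) → r.PremisesHold N X ρ →
    ∃ ρ', (∀ m, ρ' m ∈ H) ∧ r.PremisesHold N X ρ' ∧ r.conclAt N ρ' = r.conclAt N ρ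

def Fm.quantBodies : Fm S → List (ℕ × Fm S)
  | .not A => A.quantBodies
  | .and A B | .or A B | .imp A B => A.quantBodies ++ B.quantBodies
  | .all n A | .ex n A => (n, A) :: A.quantBodies
  | _ => []

def QuantWitnessed (N : Struc S) (H : Set N.U) (n : ℕ) (C : Fm S) : Prop :=
  ∀ ρ : ℕ → N.U, (∀ m, ρ m ∈ H) →
    ∀ b, ∃ b' ∈ H, (Sat N (update ρ n b') C ↔ Sat N (update ρ n b) C)

end Rules

structure Struc.Embedding {S : Signature} (N₁ N₂ : Struc S) where
  toFun : N₁.U → N₂.U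
  injective : Function.Injective toFun
  map_interpF (f : S.Func) (v : Fin (S.arF f) → N₁.U) :
    toFun (N₁.interpF f v) = N₂.interpF f (toFun ∘ v)
  map_interpP (Q : S.Pred) (v : Fin (S.arP Q) → N₁.U) :
    toFun ∘ v ∈ N₂.interpP Q ↔ v ∈ N₁.interpP Q
  map_interpI (w : (P : S.IndPred) × (Fin (S.arI P) → N₁.U)) :
    Sigma.mk w.1 (toFun ∘ w.2) ∈ N₂.interpI ↔ w ∈ N₁.interpI

namespace Struc.Embedding

variable {S : Signature} {N₁ N₂ : Struc S} (e : N₁.Embedding N₂)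

instance : CoeFun (N₁.Embedding N₂) fun _ => N₁.U → N₂.U := ⟨toFun⟩

def mapArgs (w : (P : S.IndPred) × (Fin (S.arI P) → N₁.U)) :
    (P : S.IndPred) × (Fin (S.arI P) → N₂.U) :=
  Sigma.map id (fun _ v => e ∘ v) w

theorem mapArgs_injective : Function.Injective e.mapArgs :=
  Function.injective_id.sigma_map fun _ => e.injective.comp_left

theorem interpI_eq : N₁.interpI = e.mapArgs ⁻¹' N₂.interpI :=
  Set.ext fun w => (e.map_interpI w).symm

theorem map_eval (ρ : ℕ → N₁.U) : ∀ t : Tm S, e (t.eval N₁ ρ) = t.eval N₂ (e ∘ ρ)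
  | .var _ => rfl
  | .func f ts => (e.map_interpF f _).trans <|
      congrArg (N₂.interpF f) (funext fun i => map_eval ρ (ts i))

theorem comp_eval (ρ : ℕ → N₁.U) {k : ℕ} (ts : Fin k → Tm S) :
    e ∘ (fun i => (ts i).eval N₁ ρ) = fun i => (ts i).eval N₂ (e ∘ ρ) :=
  funext fun i => e.map_eval ρ (ts i)

theorem mapArgs_conclAt (r : ProdRule S) (ρ : ℕ → N₁.U) :
    e.mapArgs (r.conclAt N₁ ρ) = r.conclAt N₂ (e ∘ ρ) :=
  congrArg (Sigma.mk r.concl) (e.comp_eval ρ r.conclArgs)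

theorem premisesHold_comp_iff (r : ProdRule S)
    (X : Set ((P : S.IndPred) × (Fin (S.arI P) → N₂.U))) (ρ : ℕ → N₁.U) :
    r.PremisesHold N₂ X (e ∘ ρ) ↔ r.PremisesHold N₁ (e.mapArgs ⁻¹' X) ρ := by
  simp only [ProdRule.PremisesHold, Set.mem_preimage, mapArgs, Sigma.map_mk, id_eq,
    ← e.map_interpP, e.comp_eval]

theorem step_preimage (Φ : List (ProdRule S))
    (X : Set ((P : S.IndPred) × (Fin (S.arI P) → N₂.U)))
    (hR : ∀ r ∈ Φ, RuleWitnessedAt N₂ (Set.range e) X r) :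
    step N₁ Φ (e.mapArgs ⁻¹' X) = e.mapArgs ⁻¹' step N₂ Φ X := by
  ext w
  simp only [Set.mem_preimage, mem_step]
  constructor
  · rintro ⟨r, hr, ρ, hprem, rfl⟩
    exact ⟨r, hr, e ∘ ρ, (e.premisesHold_comp_iff r X ρ).2 hprem, e.mapArgs_conclAt r ρ⟩
  · rintro ⟨r, hr, ρ, hprem, hw⟩
    have hconcl : ∀ i, (r.conclAt N₂ ρ).2 i ∈ Set.range e := by
      obtain ⟨P, v⟩ := w
      obtain ⟨rfl, hv⟩ := Sigma.mk.inj_iff.1 hw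
      exact fun i => ⟨v i, congrFun (eq_of_heq hv) i⟩
    obtain ⟨ρ', hρ', hprem', hconcl'⟩ := hR r hr ρ hconcl hprem
    choose ρ₁ hρ₁ using hρ'
    obtain rfl : e ∘ ρ₁ = ρ' := funext hρ₁
    refine ⟨r, hr, ρ₁, (e.premisesHold_comp_iff r X ρ₁).1 hprem', e.mapArgs_injective ?_⟩
    rw [hw, e.mapArgs_conclAt, hconcl']

theorem iterate_step_preimage (Φ : List (ProdRule S))
    (hR : ∀ n, ∀ r ∈ Φ, RuleWitnessedAt N₂ (Set.range e) ((step N₂ Φ)^[n] ∅) r) (n : ℕ) :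
    (step N₁ Φ)^[n] ∅ = e.mapArgs ⁻¹' (step N₂ Φ)^[n] ∅ := by
  induction n with
  | zero => rfl
  | succ n ih =>
    rw [Function.iterate_succ_apply', Function.iterate_succ_apply', ih,
      e.step_preimage Φ _ (hR n)]

theorem standard {Φ : List (ProdRule S)} (h₂ : Standard N₂ Φ)
    (hR : ∀ n, ∀ r ∈ Φ, RuleWitnessedAt N₂ (Set.range e) ((step N₂ Φ)^[n] ∅) r) :
    Standard N₁ Φ := by
  rw [Standard, e.interpI_eq, h₂, lfp_stepHom_eq_iUnion, lfp_stepHom_eq_iUnion,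
    Set.preimage_iUnion]
  simp only [e.iterate_step_preimage Φ hR]

theorem sat_iff (B : Fm S) (hB : ∀ p ∈ B.quantBodies, QuantWitnessed N₂ (Set.range e) p.1 p.2)
    (ρ : ℕ → N₁.U) : Sat N₂ (e ∘ ρ) B ↔ Sat N₁ ρ B := by
  induction B generalizing ρ with
  | fals => rfl
  | eq t u =>
    simp only [Sat, ← e.map_eval]
    exact e.injective.eq_iff
  | pred Q ts =>
    simp only [Sat, ← e.comp_eval]
    exact e.map_interpP Q _
  | ind P ts =>
    simp only [Sat, ← e.comp_eval]
    exact e.map_interpI ⟨P, _⟩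
  | not B ih => exact not_congr (ih hB ρ)
  | and B C ihB ihC =>
    exact and_congr (ihB (fun p hp => hB p (List.mem_append_left _ hp)) ρ)
      (ihC (fun p hp => hB p (List.mem_append_right _ hp)) ρ)
  | or B C ihB ihC =>
    exact or_congr (ihB (fun p hp => hB p (List.mem_append_left _ hp)) ρ)
      (ihC (fun p hp => hB p (List.mem_append_right _ hp)) ρ)
  | imp B C ihB ihC =>
    exact imp_congr (ihB (fun p hp => hB p (List.mem_append_left _ hp)) ρ)
      (ihC (fun p hp => hB p (List.mem_append_right _ hp)) ρ)
  | all n C ih =>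
    have hW := hB (n, C) List.mem_cons_self (e ∘ ρ) fun m => ⟨ρ m, rfl⟩
    have ih' a := ih (fun p hp => hB p (List.mem_cons_of_mem _ hp)) (update ρ n a)
    simp only [Sat, ← ih', comp_update]
    refine ⟨fun h a => h (e a), fun h b => ?_⟩
    obtain ⟨_, ⟨a, rfl⟩, hab⟩ := hW b
    exact hab.1 (h a)
  | ex n C ih =>
    have hW := hB (n, C) List.mem_cons_self (e ∘ ρ) fun m => ⟨ρ m, rfl⟩
    have ih' a := ih (fun p hp => hB p (List.mem_cons_of_mem _ hp)) (update ρ n a)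
    simp only [Sat, ← ih', comp_update]
    refine ⟨fun ⟨b, hb⟩ => ?_, fun ⟨a, ha⟩ => ⟨e a, ha⟩⟩
    obtain ⟨_, ⟨a, rfl⟩, hab⟩ := hW b
    exact ⟨a, hab.2 hb⟩

def reduct {N₁ N₂ : Struc S.addConsts} (e : N₁.Embedding N₂) : N₁.reduct.Embedding N₂.reduct where
  toFun := e
  injective := e.injective
  map_interpF f := e.map_interpF (.inl f)
  map_interpP := e.map_interpP
  map_interpI := e.map_interpI

end Struc.Embedding

section TermModel

variable {T : Signature} (N : Struc T) (x₀ : N.U)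

noncomputable def termEval : (termModel N).U → N.U :=
  Quotient.lift (fun t : ClosedTm T => t.1.eval N fun _ => x₀) fun _ _ h => h _

theorem termEval_mk (t : ClosedTm T) (ρ : ℕ → N.U) :
    termEval N x₀ (Quotient.mk _ t) = t.1.eval N ρ :=
  Tm.eval_congr N t.1 (by simp [t.2])

theorem termEval_eq_out (a : (termModel N).U) (ρ : ℕ → N.U) :
    termEval N x₀ a = a.out.1.eval N ρ := by
  conv_lhs => rw [← Quotient.out_eq a]
  exact termEval_mk N x₀ _ ρ

theorem termEval_injective : Function.Injective (termEval N x₀) := by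
  intro a b
  induction a using Quotient.ind
  induction b using Quotient.ind
  intro h
  exact Quotient.sound fun ρ => by rwa [← termEval_mk N x₀ _ ρ, ← termEval_mk N x₀ _ ρ]

theorem exists_rep_forall_mem_iff {k : ℕ} (Z : Set (Fin k → N.U)) (v : Fin k → (termModel N).U) :
    (∃ g : Fin k → ClosedTm T, (∀ i, v i = Quotient.mk _ (g i)) ∧
        ∀ ρ : ℕ → N.U, (fun i => (g i).1.eval N ρ) ∈ Z) ↔ termEval N x₀ ∘ v ∈ Z := by
  constructor
  · rintro ⟨g, hg, hZ⟩
    convert hZ fun _ => x₀ using 1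
    funext i
    rw [Function.comp_apply, hg i, termEval_mk N x₀ _ fun _ => x₀]
  · intro hZ
    refine ⟨fun i => (v i).out, fun i => (Quotient.out_eq (v i)).symm, fun ρ => ?_⟩
    convert hZ using 1
    funext i
    exact (termEval_eq_out N x₀ (v i) ρ).symm

noncomputable def termModelEmbedding : (termModel N).Embedding N where
  toFun := termEval N x₀
  injective := termEval_injective N x₀
  map_interpF f v := by
    show termEval N x₀ (Quotient.mk _ (ClosedTm.func f _)) = _
    rw [termEval_mk N x₀ _ fun _ => x₀]
    exact congrArg (N.interpF f) (funext fun i => (termEval_eq_out N x₀ (v i) _).symm)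
  map_interpP Q v := (exists_rep_forall_mem_iff N x₀ (N.interpP Q) v).symm
  map_interpI := fun ⟨P, v⟩ => (exists_rep_forall_mem_iff N x₀
    (Sigma.mk (β := fun P => Fin (T.arI P) → N.U) P ⁻¹' N.interpI) v).symm

end TermModel

section NameConstants

variable {S : Signature}

def ClosedTm.name (S : Signature) (n : ℕ) : ClosedTm S.addConsts :=
  ClosedTm.func (.inr n) Fin.elim0

theorem eval_addConsts_mem_range (M : Struc S) (c : ℕ → M.U)
    (hc : ∀ f v, (∀ i, v i ∈ Set.range c) → M.interpF f v ∈ Set.range c) :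
    ∀ t : Tm S.addConsts, t.eval (addConstsStruc M c) (fun _ => c 0) ∈ Set.range c
  | .var _ => ⟨0, rfl⟩
  | .func (.inl f) ts => hc f _ fun i => eval_addConsts_mem_range M c hc (ts i)
  | .func (.inr n) _ => ⟨n, rfl⟩

theorem range_termModelEmbedding (M : Struc S) (c : ℕ → M.U)
    (hc : ∀ f v, (∀ i, v i ∈ Set.range c) → M.interpF f v ∈ Set.range c) :
    Set.range (termModelEmbedding (addConstsStruc M c) (c 0)) = Set.range c := by
  refine subset_antisymm ?_ fun _ ⟨n, hn⟩ => ⟨Quotient.mk _ (ClosedTm.name S n), hn⟩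
  rintro _ ⟨a, rfl⟩
  change termEval (addConstsStruc M c) (c 0) a ∈ _
  rw [termEval_eq_out (addConstsStruc M c) (c 0) a fun _ => c 0]
  exact eval_addConsts_mem_range M c hc _

end NameConstants

theorem exists_countable_closure {X ι : Type*} [Countable ι]
    (F : ι → (k : ℕ) × ((Fin k → X) → X)) {s : Set X} (hs : s.Countable) :
    ∃ H, s ⊆ H ∧ H.Countable ∧ ∀ i v, (∀ j, v j ∈ H) → (F i).2 v ∈ H := by
  let close : Set X → Set X := fun T => T ∪ ⋃ i, (F i).2 '' {v | ∀ j, v j ∈ T}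
  have hmono : Monotone fun k => close^[k] s := monotone_nat_of_le_succ fun k => by
    rw [Function.iterate_succ_apply']
    exact Set.subset_union_left
  refine ⟨⋃ k, close^[k] s, Set.subset_iUnion (fun k => close^[k] s) 0,
    Set.countable_iUnion fun k => ?_, fun i v hv => ?_⟩
  · induction k with
    | zero => exact hs
    | succ k ih =>
      rw [Function.iterate_succ_apply']
      exact ih.union (Set.countable_iUnion fun i => (Set.countable_pi fun _ => ih).image _)
  · choose k hk using fun j => Set.mem_iUnion.1 (hv j)
    obtain ⟨K, hK⟩ := Finite.exists_le k
    refine Set.mem_iUnion.2 ⟨K + 1, ?_⟩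
    rw [Function.iterate_succ_apply']
    exact Or.inr (Set.mem_iUnion.2 ⟨i, v, fun j => hmono (hK j) (hk j), rfl⟩)

section Hull

variable {S : Signature} (M : Struc S) [Nonempty M.U]

noncomputable def tupleAssignment {k : ℕ} (v : Fin k → M.U) (m : ℕ) : M.U :=
  if h : m < k then v ⟨m, h⟩ else Classical.arbitrary _

/- A witness only sees the first `C.fv.sup id + 1` values of the assignment, so that the witnesses
form a countable family of finitary operations. Choosing `β := Sat M (update ρ n b) C` gives a
witness that agrees with `b` on `C`, which serves both for `∃` and for counterexamples to `∀`. -/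
noncomputable def quantWitness (n : ℕ) (C : Fm S) (β : Prop) (v : Fin (C.fv.sup id + 1) → M.U) :
    M.U :=
  Classical.epsilon fun b => (Sat M (update (tupleAssignment M v) n b) C ↔ β)

theorem sat_quantWitness_iff (n : ℕ) (C : Fm S) (ρ : ℕ → M.U) (b : M.U) :
    Sat M (update ρ n (quantWitness M n C (Sat M (update ρ n b) C) fun j => ρ j)) C ↔
      Sat M (update ρ n b) C := by
  have hagree (b' : M.U) :
      Sat M (update (tupleAssignment M fun j : Fin (C.fv.sup id + 1) => ρ j) n b') C ↔
        Sat M (update ρ n b') C :=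
    sat_congr M C <| eqOn_update (fun m hm => dif_pos <| Nat.lt_succ_of_le <|
      Finset.le_sup (f := id) (Finset.mem_of_mem_erase hm)) b'
  exact (hagree _).symm.trans (Classical.epsilon_spec
    (p := fun b' => Sat M (update _ n b') C ↔ Sat M (update ρ n b) C) ⟨b, hagree b⟩)

noncomputable def ruleWitness (r : ProdRule S)
    (X : Set ((P : S.IndPred) × (Fin (S.arI P) → M.U))) (v : Fin (S.arI r.concl) → M.U) :
    ℕ → M.U :=
  Classical.epsilon fun ρ => r.PremisesHold M X ρ ∧ r.conclAt M ρ = ⟨r.concl, v⟩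

theorem ruleWitness_spec (r : ProdRule S) (X : Set ((P : S.IndPred) × (Fin (S.arI P) → M.U)))
    {ρ : ℕ → M.U} (h : r.PremisesHold M X ρ) :
    r.PremisesHold M X (ruleWitness M r X (r.conclAt M ρ).2) ∧
      r.conclAt M (ruleWitness M r X (r.conclAt M ρ).2) = r.conclAt M ρ :=
  Classical.epsilon_spec
    (p := fun ρ' => r.PremisesHold M X ρ' ∧ r.conclAt M ρ' = ⟨r.concl, (r.conclAt M ρ).2⟩)
    ⟨ρ, h, rfl⟩

theorem exists_countable_hull [Countable S.Func] (Φ : List (ProdRule S)) (A : Fm S)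
    (ρ : ℕ → M.U) :
    ∃ H : Set M.U, Set.range ρ ⊆ H ∧ H.Countable ∧
      (∀ f v, (∀ i, v i ∈ H) → M.interpF f v ∈ H) ∧
      (∀ p ∈ A.quantBodies, QuantWitnessed M H p.1 p.2) ∧
      ∀ n, ∀ r ∈ Φ, RuleWitnessedAt M H ((step M Φ)^[n] ∅) r := by
  classical
  let F : S.Func ⊕ ({p // p ∈ A.quantBodies} × Prop) ⊕ ({r // r ∈ Φ} × ℕ × ℕ) →
      (k : ℕ) × ((Fin k → M.U) → M.U) :=
    Sum.elim (fun f => ⟨_, M.interpF f⟩) <| Sum.elim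
      (fun pβ => ⟨_, quantWitness M pβ.1.1.1 pβ.1.1.2 pβ.2⟩)
      fun rnm => ⟨_, fun v => ruleWitness M rnm.1.1 ((step M Φ)^[rnm.2.1] ∅) v rnm.2.2⟩
  obtain ⟨H, hρH, hHc, hH⟩ := exists_countable_closure F (Set.countable_range ρ)
  refine ⟨H, hρH, hHc, fun f => hH (.inl f), ?_, ?_⟩
  · rintro ⟨n, C⟩ hp ρ hρ b
    exact ⟨_, hH (.inr (.inl (⟨_, hp⟩, _))) _ fun j => hρ j, sat_quantWitness_iff M n C ρ b⟩
  · intro n r hr ρ hconcl hprem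
    obtain ⟨hprem', hconcl'⟩ := ruleWitness_spec M r _ hprem
    exact ⟨_, fun m => hH (.inr (.inr (⟨r, hr⟩, n, m))) _ hconcl, hprem', hconcl'⟩

end Hull

theorem stmt12_general {S : Signature} [Countable S.Func] (Φ : List (ProdRule S)) (A : Fm S) :
    (∀ M : Struc S, Nonempty M.U → Standard M Φ → ∀ ρ : ℕ → M.U, Sat M ρ A) ↔
      (∀ D : TermModelData S.addConsts,
        Standard D.toStruc (Φ.map ProdRule.lift) →
          ∀ ρ : ℕ → D.toStruc.U, Sat D.toStruc ρ A.lift) := by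
  refine ⟨fun h D hD ρ => (sat_lift _ A ρ).2 <|
    h _ ⟨Quotient.mk _ (ClosedTm.name S 0)⟩ ((standard_lift _ Φ).1 hD) ρ, ?_⟩
  intro h M _ hM ρ
  obtain ⟨H, hρH, hHc, hF, hQ, hR⟩ := exists_countable_hull M Φ A ρ
  obtain ⟨c, rfl⟩ := hHc.exists_eq_range ⟨ρ 0, hρH ⟨0, rfl⟩⟩
  let e : (termModel (addConstsStruc M c)).reduct.Embedding M :=
    (termModelEmbedding (addConstsStruc M c) (c 0)).reduct
  have he : Set.range e = Set.range c := range_termModelEmbedding M c hF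
  rw [← he] at hρH hQ hR
  choose ρ' hρ' using fun m => hρH ⟨m, rfl⟩
  have hstd : Standard (termModel (addConstsStruc M c)) (Φ.map ProdRule.lift) :=
    (standard_lift _ Φ).2 (e.standard hM hR)
  have hsat := (e.sat_iff A hQ ρ').2 ((sat_lift _ A ρ').1 (h _ hstd ρ'))
  rwa [show e ∘ ρ' = ρ from funext hρ'] at hsat

/-- for a closed formula `A` of `Σ`, the following are equivalent:
(1) `A` holds in every standard model of `(Σ, Φ)`;
(2) `A` holds in every standard term model of `(Σ_c, Φ)`, where `Σ_c` extends `Σ`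
by countably many fresh constants. -/
theorem stmt12 {S : Signature} [Countable S.Func] [Countable S.Pred]
    [Countable S.IndPred] (Φ : List (ProdRule S)) (A : Fm S) (hA : A.fv = ∅) :
    (∀ M : Struc S, Nonempty M.U → Standard M Φ → ∀ ρ : ℕ → M.U, Sat M ρ A) ↔
      (∀ D : TermModelData S.addConsts,
        Standard D.toStruc (Φ.map ProdRule.lift) →
          ∀ ρ : ℕ → D.toStruc.U, Sat D.toStruc ρ A.lift) :=
  stmt12_general Φ A
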